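/- arXiv:2201.07700 — 5 statements merged into one kernel-verified Lean document; each statement's English description precedes it below -/
import Mathlib

section
/- (Exploitability of ADO is monotonically non-increasing.) Let A : S₁ × S₂ → ℝ be the payoff matrix of a finite two-player zero-sum game, and let T₁ ⊆ T₁' ⊆ S₁ and T₂ ⊆ T₂' ⊆ S₂ be nonempty population sets. Let x ∈ Δ(T₁) attain max_{x'∈Δ(T₁)} min_{y'∈Δ(S₂)} v(x',y') and x⁺ ∈ Δ(T₁') attain the corresponding maximum over Δ(T₁'); let y ∈ Δ(T₂) attain min_{y'∈Δ(T₂)} max_{x'∈Δ(S₁)} v(x',y') and y⁺ ∈ Δ(T₂') attain the corresponding minimum over Δ(T₂'). Then e(x⁺, y⁺) ≤ e(x, y). -/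
open scoped BigOperators

/-- The set of mixed strategies over a finite action set `S`. -/
def mixed (S : Type*) [Fintype S] : Set (S → ℝ) :=
  {x | (∀ a, 0 ≤ x a) ∧ ∑ a, x a = 1}

/-- Mixed strategies supported in a subset `T` of the action set. -/
def mixedOn {S : Type*} [Fintype S] (T : Set S) : Set (S → ℝ) :=
  {x | x ∈ mixed S ∧ ∀ a ∉ T, x a = 0}

/-- Expected payoff to player 1: `v(x,y) = ∑ x(a) A(a,b) y(b)`. -/
def payoff {S₁ S₂ : Type*} [Fintype S₁] [Fintype S₂]
    (A : S₁ → S₂ → ℝ) (x : S₁ → ℝ) (y : S₂ → ℝ) : ℝ :=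
  ∑ a, ∑ b, x a * A a b * y b

/-- `min_{y ∈ Δ(S₂)} v(x,y)`, the value of player 1's strategy `x`
against a best-responding opponent. -/
noncomputable def minVal {S₁ S₂ : Type*} [Fintype S₁] [Fintype S₂]
    (A : S₁ → S₂ → ℝ) (x : S₁ → ℝ) : ℝ :=
  sInf (payoff A x '' mixed S₂)

/-- `max_{x ∈ Δ(S₁)} v(x,y)`, the value of a best response against
player 2's strategy `y`. -/
noncomputable def maxVal {S₁ S₂ : Type*} [Fintype S₁] [Fintype S₂]
    (A : S₁ → S₂ → ℝ) (y : S₂ → ℝ) : ℝ :=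
  sSup ((fun x => payoff A x y) '' mixed S₁)

/-- Exploitability of the profile `(x,y)`:
`e(x,y) = max_{x'} v(x',y) - min_{y'} v(x,y')`. -/
noncomputable def exploit {S₁ S₂ : Type*} [Fintype S₁] [Fintype S₂]
    (A : S₁ → S₂ → ℝ) (x : S₁ → ℝ) (y : S₂ → ℝ) : ℝ :=
  maxVal A y - minVal A x

/-- The mixed strategy placing probability 1 on the pure strategy `a`. -/
def pureStrat {S : Type*} [DecidableEq S] (a : S) : S → ℝ :=
  fun b => if b = a then 1 else 0

/-- the exploitability of ADO is monotonically non-increasing. -/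
theorem ado_exploitability_nonincreasing
    {S₁ S₂ : Type*} [Fintype S₁] [Fintype S₂] [Nonempty S₁] [Nonempty S₂]
    (A : S₁ → S₂ → ℝ)
    (T₁ T₁' : Set S₁) (T₂ T₂' : Set S₂)
    (hT₁ : T₁.Nonempty) (hT₂ : T₂.Nonempty)
    (hT₁sub : T₁ ⊆ T₁') (hT₂sub : T₂ ⊆ T₂')
    (x xp : S₁ → ℝ) (y yp : S₂ → ℝ)
    -- x attains max_{x'∈Δ(T₁)} min_{y'∈Δ(S₂)} v(x',y')
    (hx : x ∈ mixedOn T₁) (hxmax : ∀ x' ∈ mixedOn T₁, minVal A x' ≤ minVal A x)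
    -- x⁺ attains the corresponding maximum over Δ(T₁')
    (hxp : xp ∈ mixedOn T₁') (hxpmax : ∀ x' ∈ mixedOn T₁', minVal A x' ≤ minVal A xp)
    -- y attains min_{y'∈Δ(T₂)} max_{x'∈Δ(S₁)} v(x',y')
    (hy : y ∈ mixedOn T₂) (hymin : ∀ y' ∈ mixedOn T₂, maxVal A y ≤ maxVal A y')
    -- y⁺ attains the corresponding minimum over Δ(T₂')
    (hyp : yp ∈ mixedOn T₂') (hypmin : ∀ y' ∈ mixedOn T₂', maxVal A yp ≤ maxVal A y') :
    exploit A xp yp ≤ exploit A x y := by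
  have h1 : minVal A x ≤ minVal A xp :=
    hxpmax x ⟨hx.1, fun a ha => hx.2 a fun h => ha (hT₁sub h)⟩
  have h2 : maxVal A yp ≤ maxVal A y :=
    hypmin y ⟨hy.1, fun b hb => hy.2 b fun h => hb (hT₂sub h)⟩
  unfold exploit
  linarith
end

section
/- (Value-equality chain in the termination proof of ADO.) Let A : S₁ × S₂ → ℝ be the payoff matrix of a finite two-player zero-sum game and let T₁ ⊆ S₁, T₂ ⊆ S₂ be nonempty. Suppose (x^r, y') is a Nash equilibrium of the restricted game G¹ (player 1 restricted to Δ(T₁), player 2 over Δ(S₂)) and (x', y^r) is a Nash equilibrium of the restricted game G² (player 1 over Δ(S₁), player 2 restricted to Δ(T₂)), and suppose the support of x' is contained in T₁ and the support of y' is contained in T₂. Then v(x^r, y^r) = v(x', y^r) = v(x', y') = v(x^r, y'). -/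
open scoped BigOperators

/-- value-equality chain in the termination proof of ADO. -/
theorem ado_termination_value_chain
    {S₁ S₂ : Type*} [Fintype S₁] [Fintype S₂] [Nonempty S₁] [Nonempty S₂]
    (A : S₁ → S₂ → ℝ)
    (T₁ : Set S₁) (T₂ : Set S₂) (hT₁ : T₁.Nonempty) (hT₂ : T₂.Nonempty)
    (xr x' : S₁ → ℝ) (yr y' : S₂ → ℝ)
    -- (xr, y') is a Nash equilibrium of G¹ (player 1 restricted to Δ(T₁))
    (hxr : xr ∈ mixedOn T₁) (hy' : y' ∈ mixed S₂)
    (hG1x : ∀ x ∈ mixedOn T₁, payoff A x y' ≤ payoff A xr y')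
    (hG1y : ∀ y ∈ mixed S₂, payoff A xr y' ≤ payoff A xr y)
    -- (x', yr) is a Nash equilibrium of G² (player 2 restricted to Δ(T₂))
    (hx' : x' ∈ mixed S₁) (hyr : yr ∈ mixedOn T₂)
    (hG2x : ∀ x ∈ mixed S₁, payoff A x yr ≤ payoff A x' yr)
    (hG2y : ∀ y ∈ mixedOn T₂, payoff A x' yr ≤ payoff A x' y)
    -- supports of x' and y' lie in the populations
    (hsuppx' : ∀ a, x' a ≠ 0 → a ∈ T₁)
    (hsuppy' : ∀ b, y' b ≠ 0 → b ∈ T₂) :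
    payoff A xr yr = payoff A x' yr ∧
      payoff A x' yr = payoff A x' y' ∧
      payoff A x' y' = payoff A xr y' := by
  have hx'T : x' ∈ mixedOn T₁ := ⟨hx', fun a ha => by
    by_contra h; exact ha (hsuppx' a h)⟩
  have hy'T : y' ∈ mixedOn T₂ := ⟨hy', fun b hb => by
    by_contra h; exact hb (hsuppy' b h)⟩
  have h1 : payoff A xr yr ≤ payoff A x' yr := hG2x xr hxr.1
  have h2 : payoff A x' yr ≤ payoff A x' y' := hG2y y' hy'T
  have h3 : payoff A x' y' ≤ payoff A xr y' := hG1x x' hx'T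
  have h4 : payoff A xr y' ≤ payoff A xr yr := hG1y yr hyr.1
  have e1 : payoff A xr yr = payoff A x' yr := le_antisymm h1 (h2.trans (h3.trans h4))
  have e2 : payoff A x' yr = payoff A x' y' := le_antisymm h2 (h3.trans (h4.trans h1))
  have e3 : payoff A x' y' = payoff A xr y' := le_antisymm h3 (h4.trans (h1.trans h2))
  exact ⟨e1, e2, e3⟩
end

section
/- (Proposition: upon termination, the restricted NE of ADO is a Nash equilibrium of the full game.) Let A : S₁ × S₂ → ℝ be the payoff matrix of a finite two-player zero-sum game and let T₁ ⊆ S₁, T₂ ⊆ S₂ be nonempty. Suppose (x^r, y') is a Nash equilibrium of the restricted game G¹ (player 1 restricted to Δ(T₁), player 2 over Δ(S₂)) and (x', y^r) is a Nash equilibrium of the restricted game G² (player 1 over Δ(S₁), player 2 restricted to Δ(T₂)), and suppose the support of x' is contained in T₁ and the support of y' is contained in T₂. Then (x^r, y^r) is a Nash equilibrium of the full game: v(x, y^r) ≤ v(x^r, y^r) ≤ v(x^r, y) for all x ∈ Δ(S₁) and y ∈ Δ(S₂). -/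
open scoped BigOperators

/-- upon termination, the restricted NE of ADO is a Nash
equilibrium of the full game. -/
theorem ado_termination_nash
    {S₁ S₂ : Type*} [Fintype S₁] [Fintype S₂] [Nonempty S₁] [Nonempty S₂]
    (A : S₁ → S₂ → ℝ)
    (T₁ : Set S₁) (T₂ : Set S₂) (hT₁ : T₁.Nonempty) (hT₂ : T₂.Nonempty)
    (xr x' : S₁ → ℝ) (yr y' : S₂ → ℝ)
    -- (xr, y') is a Nash equilibrium of G¹ (player 1 restricted to Δ(T₁))
    (hxr : xr ∈ mixedOn T₁) (hy' : y' ∈ mixed S₂)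
    (hG1x : ∀ x ∈ mixedOn T₁, payoff A x y' ≤ payoff A xr y')
    (hG1y : ∀ y ∈ mixed S₂, payoff A xr y' ≤ payoff A xr y)
    -- (x', yr) is a Nash equilibrium of G² (player 2 restricted to Δ(T₂))
    (hx' : x' ∈ mixed S₁) (hyr : yr ∈ mixedOn T₂)
    (hG2x : ∀ x ∈ mixed S₁, payoff A x yr ≤ payoff A x' yr)
    (hG2y : ∀ y ∈ mixedOn T₂, payoff A x' yr ≤ payoff A x' y)
    -- supports of x' and y' lie in the populations
    (hsuppx' : ∀ a, x' a ≠ 0 → a ∈ T₁)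
    (hsuppy' : ∀ b, y' b ≠ 0 → b ∈ T₂) :
    (∀ x ∈ mixed S₁, payoff A x yr ≤ payoff A xr yr) ∧
      (∀ y ∈ mixed S₂, payoff A xr yr ≤ payoff A xr y) := by
  have hx'T : x' ∈ mixedOn T₁ := ⟨hx', fun a ha => by
    by_contra h; exact ha (hsuppx' a h)⟩
  have hy'T : y' ∈ mixedOn T₂ := ⟨hy', fun b hb => by
    by_contra h; exact hb (hsuppy' b h)⟩
  have hyrM : yr ∈ mixed S₂ := hyr.1
  have hxrM : xr ∈ mixed S₁ := hxr.1
  -- chain: v(x', yr) ≤ v(x', y') ≤ v(xr, y') ≤ v(xr, yr)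
  have h1 : payoff A x' yr ≤ payoff A x' y' := hG2y y' hy'T
  have h2 : payoff A x' y' ≤ payoff A xr y' := hG1x x' hx'T
  have h3 : payoff A xr y' ≤ payoff A xr yr := hG1y yr hyrM
  have h4 : payoff A xr yr ≤ payoff A x' yr := hG2x xr hxrM
  -- hence all four are equal
  have key : payoff A x' yr = payoff A xr yr := le_antisymm (h1.trans (h2.trans h3)) h4
  have key2 : payoff A xr y' = payoff A xr yr :=
    le_antisymm h3 (key ▸ h4.trans (h1.trans h2))
  constructor
  · intro x hx
    calc payoff A x yr ≤ payoff A x' yr := hG2x x hx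
      _ = payoff A xr yr := key
  · intro y hy
    calc payoff A xr yr = payoff A xr y' := key2.symm
      _ ≤ payoff A xr y := hG1y y hy
end

section
/- (Best-response form of the ADO termination criterion.) Let A : S₁ × S₂ → ℝ be the payoff matrix of a finite two-player zero-sum game and let T₁ ⊆ S₁, T₂ ⊆ S₂ be nonempty. Let x^r ∈ Δ(T₁) attain max_{x∈Δ(T₁)} min_{y∈Δ(S₂)} v(x,y) and let y^r ∈ Δ(T₂) attain min_{y∈Δ(T₂)} max_{x∈Δ(S₁)} v(x,y). If every pure strategy a ∈ S₁ that is a best response to y^r (i.e., attains max_{x∈Δ(S₁)} v(x, y^r)) lies in T₁, and every pure strategy b ∈ S₂ that is a best response to x^r (i.e., attains min_{y∈Δ(S₂)} v(x^r, y)) lies in T₂, then (x^r, y^r) is a Nash equilibrium of the full game. -/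
/-!
By von Neumann's minimax theorem the restricted game on `Δ(T₁) × Δ(T₂)` has a saddle point
`(x*, y*)`. Since `yr` minimises the convex function `maxVal A` on `Δ(T₂)`, moving from `yr`
towards `y*` cannot lower it, so some pure best response `a` to `yr` has
`maxVal A yr ≤ v(a, y*)`; symmetrically some pure best response `b` to `xr` has
`v(x*, b) ≤ minVal A xr`. The hypotheses put `a ∈ T₁` and `b ∈ T₂`, so the saddle point gives
`maxVal A yr ≤ v(a, y*) ≤ v(x*, b) ≤ minVal A xr`, which makes `(xr, yr)` an equilibrium.
-/

open scoped BigOperators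

open Filter Topology

section

variable {S : Type*} [Fintype S]

theorem pureStrat_mem_mixedOn [DecidableEq S] {T : Set S} {a : S} (ha : a ∈ T) :
    pureStrat a ∈ mixedOn T :=
  ⟨⟨fun b => by unfold pureStrat; split_ifs <;> norm_num, by simp [pureStrat]⟩,
    fun b hb => if_neg (ne_of_mem_of_not_mem ha hb).symm⟩

theorem mixedOn_nonempty {T : Set S} (hT : T.Nonempty) : (mixedOn T).Nonempty := by
  classical
  exact ⟨pureStrat hT.some, pureStrat_mem_mixedOn hT.some_mem⟩

theorem convex_mixedOn (T : Set S) : Convex ℝ (mixedOn T) :=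
  (convex_stdSimplex ℝ S).inter fun x hx y hy s t _ _ _ a ha => by
    simp [hx a ha, hy a ha]

theorem isCompact_mixedOn (T : Set S) : IsCompact (mixedOn T) := by
  refine (isCompact_stdSimplex ℝ S).inter_right (t := {x | ∀ a ∉ T, x a = 0}) ?_
  simp only [Set.ofPred_forall]
  exact isClosed_biInter fun a _ => isClosed_eq (continuous_apply a) continuous_const

end

theorem eventually_lineMap_lt {p₀ p V : ℝ} (h₀ : p₀ ≤ V) (h : p₀ = V → p < V) :
    ∀ᶠ t in 𝓝[>] (0 : ℝ), AffineMap.lineMap p₀ p t < V := by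
  rcases h₀.lt_or_eq with h₀ | rfl
  · have : Tendsto (AffineMap.lineMap p₀ p) (𝓝 (0 : ℝ)) (𝓝 p₀) := by
      simpa using (AffineMap.lineMap_continuous (p := p₀) (q := p)).tendsto (0 : ℝ)
    exact nhdsWithin_le_nhds (this.eventually (eventually_lt_nhds h₀))
  · filter_upwards [self_mem_nhdsWithin] with t ht
    rw [AffineMap.lineMap_apply_ring']
    nlinarith [h rfl, Set.mem_Ioi.mp ht]

section

variable {S₁ S₂ : Type*} [Fintype S₁] [Fintype S₂]

def payoffBilin (A : S₁ → S₂ → ℝ) : (S₁ → ℝ) →ₗ[ℝ] (S₂ → ℝ) →ₗ[ℝ] ℝ :=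
  (dotProductBilin ℝ ℝ).compl₂ (Matrix.of A).mulVecLin

@[simp]
theorem payoffBilin_apply (A : S₁ → S₂ → ℝ) (x : S₁ → ℝ) (y : S₂ → ℝ) :
    payoffBilin A x y = payoff A x y := by
  simp [payoffBilin, payoff, dotProduct, Matrix.mulVec, Finset.mul_sum, mul_assoc]

theorem payoff_lineMap_right (A : S₁ → S₂ → ℝ) (x : S₁ → ℝ) (y₀ y : S₂ → ℝ) (t : ℝ) :
    payoff A x (AffineMap.lineMap y₀ y t) =
      AffineMap.lineMap (payoff A x y₀) (payoff A x y) t := by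
  simpa only [LinearMap.coe_toAffineMap, payoffBilin_apply] using
    (payoffBilin A x).toAffineMap.apply_lineMap y₀ y t

/- `fun b a => -A a b` is the game seen from player 2, which turns `minVal` into `maxVal`. -/
theorem payoff_neg_swap (A : S₁ → S₂ → ℝ) (x : S₁ → ℝ) (y : S₂ → ℝ) :
    payoff (fun b a => -A a b) y x = -payoff A x y := by
  simp only [payoff, ← Finset.sum_neg_distrib]
  rw [Finset.sum_comm]
  exact Finset.sum_congr rfl fun _ _ => Finset.sum_congr rfl fun _ _ => by ring

theorem maxVal_neg_swap (A : S₁ → S₂ → ℝ) (x : S₁ → ℝ) :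
    maxVal (fun b a => -A a b) x = -minVal A x := by
  rw [minVal, maxVal, Real.sInf_def, neg_neg, ← Set.image_neg_eq_neg, Set.image_image]
  simp only [payoff_neg_swap]

theorem exists_saddlePoint_mixedOn (A : S₁ → S₂ → ℝ) {T₁ : Set S₁} {T₂ : Set S₂}
    (hT₁ : T₁.Nonempty) (hT₂ : T₂.Nonempty) :
    ∃ x ∈ mixedOn T₁, ∃ y ∈ mixedOn T₂,
      ∀ x' ∈ mixedOn T₁, ∀ y' ∈ mixedOn T₂, payoff A x' y ≤ payoff A x y' := by
  obtain ⟨y, hy, x, hx, hsaddle⟩ :=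
    Sion.exists_isSaddlePointOn (f := fun y x => payoffBilin A x y)
      (mixedOn_nonempty hT₂) (convex_mixedOn T₂) (isCompact_mixedOn T₂)
      (fun x _ => (payoffBilin A x).continuous_of_finiteDimensional.lowerSemicontinuous
        |>.lowerSemicontinuousOn _)
      (fun x _ => ((payoffBilin A x).convexOn (convex_mixedOn T₂)).quasiconvexOn)
      (convex_mixedOn T₁) (mixedOn_nonempty hT₁) (isCompact_mixedOn T₁)
      (fun y _ => ((payoffBilin A).flip y).continuous_of_finiteDimensional.upperSemicontinuous
        |>.upperSemicontinuousOn _)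
      (fun y _ => (((payoffBilin A).flip y).concaveOn (convex_mixedOn T₁)).quasiconcaveOn)
  exact ⟨x, hx, y, hy, fun x' hx' y' hy' => by simpa using hsaddle y' hy' x' hx'⟩

variable [DecidableEq S₁]

theorem payoff_eq_sum_pureStrat_left (A : S₁ → S₂ → ℝ) (x : S₁ → ℝ) (y : S₂ → ℝ) :
    payoff A x y = ∑ a, x a * payoff A (pureStrat a) y := by
  simp [payoff, pureStrat, Finset.mul_sum, mul_assoc]

variable [Nonempty S₁]

theorem exists_isGreatest_payoff_pureStrat (A : S₁ → S₂ → ℝ) (y : S₂ → ℝ) :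
    ∃ a, IsGreatest ((fun x => payoff A x y) '' mixed S₁) (payoff A (pureStrat a) y) := by
  obtain ⟨a, ha⟩ := Finite.exists_max fun a => payoff A (pureStrat a) y
  refine ⟨a, ⟨pureStrat a, (pureStrat_mem_mixedOn (Set.mem_univ a)).1, rfl⟩, ?_⟩
  rintro _ ⟨x, hx, rfl⟩
  calc payoff A x y = ∑ a', x a' * payoff A (pureStrat a') y := payoff_eq_sum_pureStrat_left A x y
    _ ≤ ∑ a', x a' * payoff A (pureStrat a) y :=
      Finset.sum_le_sum fun a' _ => mul_le_mul_of_nonneg_left (ha a') (hx.1 a')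
    _ = payoff A (pureStrat a) y := by rw [← Finset.sum_mul, hx.2, one_mul]

theorem exists_payoff_pureStrat_eq_maxVal (A : S₁ → S₂ → ℝ) (y : S₂ → ℝ) :
    ∃ a, payoff A (pureStrat a) y = maxVal A y := by
  obtain ⟨a, ha⟩ := exists_isGreatest_payoff_pureStrat A y
  exact ⟨a, ha.csSup_eq.symm⟩

theorem payoff_le_maxVal (A : S₁ → S₂ → ℝ) {x : S₁ → ℝ} (hx : x ∈ mixed S₁) (y : S₂ → ℝ) :
    payoff A x y ≤ maxVal A y := by
  obtain ⟨a, ha⟩ := exists_isGreatest_payoff_pureStrat A y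
  exact (ha.2 ⟨x, hx, rfl⟩).trans_eq ha.csSup_eq.symm

/- If every best response to `y₀` did strictly better than `maxVal A y₀` against `y`, a small
step from `y₀` towards `y` would lower `maxVal`: the best responses lose, the others had slack. -/
theorem exists_bestResponse_of_isMinOn_maxVal (A : S₁ → S₂ → ℝ) {C : Set (S₂ → ℝ)}
    (hC : Convex ℝ C) {y₀ y : S₂ → ℝ} (hmin : IsMinOn (maxVal A) C y₀) (hy₀ : y₀ ∈ C)
    (hy : y ∈ C) :
    ∃ a, payoff A (pureStrat a) y₀ = maxVal A y₀ ∧ maxVal A y₀ ≤ payoff A (pureStrat a) y := by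
  by_contra! h
  have hlt : ∀ a, ∀ᶠ t in 𝓝[>] (0 : ℝ),
      payoff A (pureStrat a) (AffineMap.lineMap y₀ y t) < maxVal A y₀ := fun a => by
    simpa only [payoff_lineMap_right] using eventually_lineMap_lt
      (payoff_le_maxVal A (pureStrat_mem_mixedOn (Set.mem_univ a)).1 y₀) (h a)
  obtain ⟨t, hlt_t, ht⟩ := ((eventually_all.2 hlt).and (Ioo_mem_nhdsGT one_pos)).exists
  have hmem : AffineMap.lineMap y₀ y t ∈ C := hC.lineMap_mem hy₀ hy ⟨ht.1.le, ht.2.le⟩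
  obtain ⟨a, ha⟩ := exists_payoff_pureStrat_eq_maxVal A (AffineMap.lineMap y₀ y t)
  exact (hmin hmem).not_gt (ha ▸ hlt_t a)

end

section

variable {S₁ S₂ : Type*} [Fintype S₁] [Fintype S₂] [DecidableEq S₂] [Nonempty S₂]

theorem minVal_le_payoff (A : S₁ → S₂ → ℝ) (x : S₁ → ℝ) {y : S₂ → ℝ} (hy : y ∈ mixed S₂) :
    minVal A x ≤ payoff A x y := by
  rw [← neg_le_neg_iff, ← maxVal_neg_swap, ← payoff_neg_swap]
  exact payoff_le_maxVal _ hy x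

theorem exists_bestResponse_of_isMaxOn_minVal (A : S₁ → S₂ → ℝ) {D : Set (S₁ → ℝ)}
    (hD : Convex ℝ D) {x₀ x : S₁ → ℝ} (hmax : IsMaxOn (minVal A) D x₀) (hx₀ : x₀ ∈ D)
    (hx : x ∈ D) :
    ∃ b, payoff A x₀ (pureStrat b) = minVal A x₀ ∧ payoff A x (pureStrat b) ≤ minVal A x₀ := by
  have hmin : IsMinOn (maxVal fun b a => -A a b) D x₀ := isMinOn_iff.2 fun x' hx' => by
    simpa only [maxVal_neg_swap, neg_le_neg_iff] using isMaxOn_iff.1 hmax x' hx'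
  obtain ⟨b, hb_best, hb⟩ := exists_bestResponse_of_isMinOn_maxVal _ hD hmin hx₀ hx
  rw [payoff_neg_swap, maxVal_neg_swap, neg_inj] at hb_best
  rw [payoff_neg_swap, maxVal_neg_swap, neg_le_neg_iff] at hb
  exact ⟨b, hb_best, hb⟩

end

/-- best-response form of the ADO termination criterion. -/
theorem ado_termination_best_response_form
    {S₁ S₂ : Type*} [Fintype S₁] [Fintype S₂] [Nonempty S₁] [Nonempty S₂]
    [DecidableEq S₁] [DecidableEq S₂]
    (A : S₁ → S₂ → ℝ)
    (T₁ : Set S₁) (T₂ : Set S₂) (hT₁ : T₁.Nonempty) (hT₂ : T₂.Nonempty)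
    (xr : S₁ → ℝ) (yr : S₂ → ℝ)
    -- xr attains max_{x∈Δ(T₁)} min_{y∈Δ(S₂)} v(x,y)
    (hxr : xr ∈ mixedOn T₁) (hxrmax : ∀ x ∈ mixedOn T₁, minVal A x ≤ minVal A xr)
    -- yr attains min_{y∈Δ(T₂)} max_{x∈Δ(S₁)} v(x,y)
    (hyr : yr ∈ mixedOn T₂) (hyrmin : ∀ y ∈ mixedOn T₂, maxVal A yr ≤ maxVal A y)
    -- every pure best response to yr lies in T₁
    (hbr1 : ∀ a : S₁, payoff A (pureStrat a) yr = maxVal A yr → a ∈ T₁)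
    -- every pure best response to xr lies in T₂
    (hbr2 : ∀ b : S₂, payoff A xr (pureStrat b) = minVal A xr → b ∈ T₂) :
    (∀ x ∈ mixed S₁, payoff A x yr ≤ payoff A xr yr) ∧
      (∀ y ∈ mixed S₂, payoff A xr yr ≤ payoff A xr y) := by
  obtain ⟨xs, hxs, ys, hys, hsaddle⟩ := exists_saddlePoint_mixedOn A hT₁ hT₂
  obtain ⟨a, ha_best, ha⟩ := exists_bestResponse_of_isMinOn_maxVal A (convex_mixedOn T₂)
    (isMinOn_iff.2 hyrmin) hyr hys
  obtain ⟨b, hb_best, hb⟩ := exists_bestResponse_of_isMaxOn_minVal A (convex_mixedOn T₁)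
    (isMaxOn_iff.2 hxrmax) hxr hxs
  have hvalue : maxVal A yr ≤ minVal A xr := calc
    maxVal A yr ≤ payoff A (pureStrat a) ys := ha
    _ ≤ payoff A xs (pureStrat b) :=
      hsaddle _ (pureStrat_mem_mixedOn (hbr1 a ha_best)) _ (pureStrat_mem_mixedOn (hbr2 b hb_best))
    _ ≤ minVal A xr := hb
  exact ⟨fun x hx => (payoff_le_maxVal A hx yr).trans (hvalue.trans (minVal_le_payoff A xr hyr.1)),
    fun y hy => (payoff_le_maxVal A hxr.1 yr).trans (hvalue.trans (minVal_le_payoff A xr hy))⟩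
end

section
/- (RM-BR exploitability bound, cf. Proposition on RM-BR.) Let A : S₁ × S₂ → ℝ be the payoff matrix of a finite two-player zero-sum game and T₁ ⊆ S₁ nonempty. Let x¹, …, xⁿ ∈ Δ(T₁), and for each t let yᵗ ∈ Δ(S₂) be a best response to xᵗ, i.e., yᵗ attains min_{y∈Δ(S₂)} v(xᵗ, y). Define the regret R = max_{x∈Δ(T₁)} Σ_{t=1}^{n} ( v(x, yᵗ) − v(xᵗ, yᵗ) ), and let x̄ = (1/n) Σ_{t=1}^{n} xᵗ be the average strategy. Then the restricted exploitability of x̄ satisfies max_{x∈Δ(T₁)} min_{y∈Δ(S₂)} v(x,y) − min_{y∈Δ(S₂)} v(x̄, y) ≤ R/n. -/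
open scoped BigOperators

lemma pureStrat_mem {S : Type*} [Fintype S] [DecidableEq S] (a : S) :
    pureStrat a ∈ mixed S := by
  constructor
  · intro b; unfold pureStrat; split <;> norm_num
  · simp [pureStrat]

lemma mixed_le_one {S : Type*} [Fintype S] {x : S → ℝ} (hx : x ∈ mixed S) (a : S) :
    x a ≤ 1 := by
  rw [← hx.2]
  exact Finset.single_le_sum (fun b _ => hx.1 b) (Finset.mem_univ a)

lemma payoff_abs_le {S₁ S₂ : Type*} [Fintype S₁] [Fintype S₂]
    (A : S₁ → S₂ → ℝ) {x : S₁ → ℝ} {y : S₂ → ℝ}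
    (hx : x ∈ mixed S₁) (hy : y ∈ mixed S₂) :
    |payoff A x y| ≤ ∑ a, ∑ b, |A a b| := by
  calc |payoff A x y| ≤ ∑ a, ∑ b, |x a * A a b * y b| := by
        refine (Finset.abs_sum_le_sum_abs _ _).trans ?_
        exact Finset.sum_le_sum fun a _ => Finset.abs_sum_le_sum_abs _ _
    _ ≤ ∑ a, ∑ b, |A a b| := by
        refine Finset.sum_le_sum fun a _ => Finset.sum_le_sum fun b _ => ?_
        rw [abs_mul, abs_mul, abs_of_nonneg (hx.1 a), abs_of_nonneg (hy.1 b)]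
        calc x a * |A a b| * y b ≤ 1 * |A a b| * 1 := by
              apply mul_le_mul (mul_le_mul (mixed_le_one hx a) le_rfl (abs_nonneg _) zero_le_one)
                (mixed_le_one hy b) (hy.1 b)
              positivity
          _ = |A a b| := by ring

lemma payoff_avg {S₁ S₂ : Type*} [Fintype S₁] [Fintype S₂]
    (A : S₁ → S₂ → ℝ) (n : ℕ) (x : Fin n → S₁ → ℝ) (y : S₂ → ℝ) :
    payoff A (fun a => (∑ t, x t a) / n) y = (∑ t, payoff A (x t) y) / n := by
  have key : ∀ a b, (∑ t, x t a) / (n:ℝ) * A a b * y b = ∑ t, x t a * A a b * y b / n := by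
    intro a b
    rw [div_mul_eq_mul_div, div_mul_eq_mul_div, Finset.sum_mul, Finset.sum_mul, Finset.sum_div]
  simp only [payoff]
  simp only [key]
  simp only [Finset.sum_div]
  exact (Finset.sum_congr rfl fun a _ => Finset.sum_comm).trans Finset.sum_comm

/-- RM-BR exploitability bound. -/
theorem rmbr_exploitability_bound
    {S₁ S₂ : Type*} [Fintype S₁] [Fintype S₂] [Nonempty S₁] [Nonempty S₂]
    (A : S₁ → S₂ → ℝ) (T₁ : Set S₁) (hT₁ : T₁.Nonempty)
    (n : ℕ) (hn : 0 < n)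
    (x : Fin n → S₁ → ℝ) (hx : ∀ t, x t ∈ mixedOn T₁)
    (y : Fin n → S₂ → ℝ) (hy : ∀ t, y t ∈ mixed S₂)
    -- yᵗ is a best response to xᵗ, attaining min_{y∈Δ(S₂)} v(xᵗ,y)
    (hbr : ∀ t, ∀ y' ∈ mixed S₂, payoff A (x t) (y t) ≤ payoff A (x t) y')
    -- the regret R = max_{x∈Δ(T₁)} ∑ₜ (v(x,yᵗ) − v(xᵗ,yᵗ))
    (R : ℝ)
    (hR : R = sSup ((fun x' => ∑ t, (payoff A x' (y t) - payoff A (x t) (y t))) ''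
      mixedOn T₁))
    -- the average strategy x̄ = (1/n) ∑ₜ xᵗ
    (xbar : S₁ → ℝ) (hxbar : xbar = fun a => (∑ t, x t a) / n) :
    sSup (minVal A '' mixedOn T₁) - minVal A xbar ≤ R / n := by
  classical
  set C : ℝ := ∑ a, ∑ b, |A a b| with hC
  have hnR : (0:ℝ) < n := by exact_mod_cast hn
  -- nonempty mixed S₂
  obtain ⟨b₀⟩ := ‹Nonempty S₂›
  have hmS₂ : (mixed S₂).Nonempty := ⟨pureStrat b₀, pureStrat_mem b₀⟩
  -- nonempty mixedOn T₁
  obtain ⟨a₀, ha₀⟩ := hT₁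
  have hmT₁ : (mixedOn T₁).Nonempty := by
    refine ⟨pureStrat a₀, pureStrat_mem a₀, fun a ha => ?_⟩
    have hne : a ≠ a₀ := fun h => ha (h ▸ ha₀)
    simp [pureStrat, hne]
  -- minVal lower-bounds payoff
  have hminle : ∀ x' ∈ mixed S₁, ∀ y' ∈ mixed S₂, minVal A x' ≤ payoff A x' y' := by
    intro x' hx' y' hy'
    refine csInf_le ⟨-C, ?_⟩ ⟨y', hy', rfl⟩
    rintro _ ⟨y'', hy'', rfl⟩
    linarith [abs_le.1 (payoff_abs_le A hx' hy'')]
  -- regret bound: each sum ≤ R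
  have hregret : ∀ x' ∈ mixedOn T₁,
      ∑ t, (payoff A x' (y t) - payoff A (x t) (y t)) ≤ R := by
    intro x' hx'
    rw [hR]
    refine le_csSup ⟨∑ t : Fin n, (2 * C), ?_⟩ ⟨x', hx', rfl⟩
    rintro _ ⟨x'', hx'', rfl⟩
    refine Finset.sum_le_sum fun t _ => ?_
    have h1 := abs_le.1 (payoff_abs_le A hx''.1 (hy t))
    have h2 := abs_le.1 (payoff_abs_le A (hx t).1 (hy t))
    linarith [h1.2, h2.1]
  -- ∑ v(xᵗ,yᵗ) ≤ n * minVal x̄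
  have hsum_le : (∑ t, payoff A (x t) (y t)) / n ≤ minVal A xbar := by
    refine le_csInf (hmS₂.image _) ?_
    rintro _ ⟨y', hy', rfl⟩
    rw [hxbar, payoff_avg]
    refine (div_le_div_iff_of_pos_right hnR).mpr ?_
    exact Finset.sum_le_sum fun t _ => hbr t y' hy'
  rw [sub_le_iff_le_add]
  refine csSup_le (hmT₁.image _) ?_
  rintro _ ⟨x', hx', rfl⟩
  -- minVal A x' ≤ (1/n) ∑ₜ v(x', yᵗ)
  have h1 : minVal A x' ≤ (∑ t, payoff A x' (y t)) / n := by
    rw [le_div_iff₀ hnR]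
    calc minVal A x' * n = ∑ t : Fin n, minVal A x' := by
          simp [Finset.sum_const, mul_comm]
      _ ≤ ∑ t, payoff A x' (y t) :=
          Finset.sum_le_sum fun t _ => hminle x' hx'.1 (y t) (hy t)
  have h2 : (∑ t, payoff A x' (y t)) / n
      ≤ ((∑ t, payoff A (x t) (y t)) + R) / n := by
    refine (div_le_div_iff_of_pos_right hnR).mpr ?_
    have := hregret x' hx'
    rw [Finset.sum_sub_distrib] at this
    linarith
  calc minVal A x' ≤ ((∑ t, payoff A (x t) (y t)) + R) / n := h1.trans h2
    _ = (∑ t, payoff A (x t) (y t)) / n + R / n := by rw [add_div]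
    _ ≤ R / n + minVal A xbar := by linarith
end
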